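/- Let z₁, z₂, z₃ and w₁, w₂, w₃ be two triples of pairwise distinct complex numbers. Then j(z₁, z₂, z₃) = j(w₁, w₂, w₃) if and only if there exist a, b ∈ ℂ with a ≠ 0 such that the affine map z ↦ a·z + b carries the set {z₁, z₂, z₃} onto the set {w₁, w₂, w₃}; i.e., the j-invariant classifies unordered triples of distinct points of ℂ up to complex affine equivalence. -/
import Mathlib

open Complex

/-- The j-invariant as a function of the cross-ratio. -/
noncomputable def Jfun (l : ℂ) : ℂ := 4 * (l ^ 2 - l + 1) ^ 3 / (27 * l ^ 2 * (l - 1) ^ 2)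

/-- The cross-ratio of four points of `ℂ`. -/
noncomputable def crossRatio (z1 z2 z3 z4 : ℂ) : ℂ :=
  ((z1 - z3) / (z2 - z3)) * ((z2 - z4) / (z1 - z4))

/-- The j-invariant of a quadruple of points of `ℂ`. -/
noncomputable def jInv4 (z1 z2 z3 z4 : ℂ) : ℂ := Jfun (crossRatio z1 z2 z3 z4)

/-- The j-invariant of a triple of points of `ℂ` (fourth point at infinity). -/
noncomputable def jInv3 (z1 z2 z3 : ℂ) : ℂ := Jfun ((z1 - z3) / (z2 - z3))

lemma Jden_ne {l : ℂ} (h0 : l ≠ 0) (h1 : l ≠ 1) : 27 * l ^ 2 * (l - 1) ^ 2 ≠ 0 := by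
  have h1' : l - 1 ≠ 0 := sub_ne_zero.mpr h1
  exact mul_ne_zero (mul_ne_zero (by norm_num) (pow_ne_zero _ h0)) (pow_ne_zero _ h1')

lemma Jfun_inv {l : ℂ} (h0 : l ≠ 0) (h1 : l ≠ 1) : Jfun l⁻¹ = Jfun l := by
  have h1' : l - 1 ≠ 0 := sub_ne_zero.mpr h1
  have hi0 : l⁻¹ ≠ 0 := inv_ne_zero h0
  have hi1 : l⁻¹ ≠ 1 := by
    intro h; apply h1; field_simp at h; linear_combination -h
  unfold Jfun
  rw [div_eq_div_iff (Jden_ne hi0 hi1) (Jden_ne h0 h1)]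
  field_simp
  ring

lemma Jfun_one_sub {l : ℂ} (h0 : l ≠ 0) (h1 : l ≠ 1) : Jfun (1 - l) = Jfun l := by
  have hi0 : (1:ℂ) - l ≠ 0 := fun h => h1 (by linear_combination -h)
  have hi1 : (1:ℂ) - l ≠ 1 := fun h => h0 (by linear_combination -h)
  unfold Jfun
  rw [div_eq_div_iff (Jden_ne hi0 hi1) (Jden_ne h0 h1)]
  ring

lemma ratio_ne_zero {u1 u2 u3 : ℂ} (h13 : u1 ≠ u3) (h23 : u2 ≠ u3) :
    (u1 - u3) / (u2 - u3) ≠ 0 :=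
  div_ne_zero (sub_ne_zero.mpr h13) (sub_ne_zero.mpr h23)

lemma ratio_ne_one {u1 u2 u3 : ℂ} (h12 : u1 ≠ u2) (h23 : u2 ≠ u3) :
    (u1 - u3) / (u2 - u3) ≠ 1 := by
  intro h
  apply h12
  have := (div_eq_one_iff_eq (sub_ne_zero.mpr h23)).mp h
  linear_combination this

lemma jInv3_swap12 (u1 u2 u3 : ℂ) (h12 : u1 ≠ u2) (h13 : u1 ≠ u3) (h23 : u2 ≠ u3) :
    jInv3 u2 u1 u3 = jInv3 u1 u2 u3 := by
  unfold jInv3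
  rw [show (u2 - u3) / (u1 - u3) = ((u1 - u3) / (u2 - u3))⁻¹ by rw [inv_div]]
  exact Jfun_inv (ratio_ne_zero h13 h23) (ratio_ne_one h12 h23)

lemma jInv3_swap23 (u1 u2 u3 : ℂ) (h12 : u1 ≠ u2) (h13 : u1 ≠ u3) (h23 : u2 ≠ u3) :
    jInv3 u1 u3 u2 = jInv3 u1 u2 u3 := by
  unfold jInv3
  have d23 : u2 - u3 ≠ 0 := sub_ne_zero.mpr h23
  have d32 : u3 - u2 ≠ 0 := sub_ne_zero.mpr (Ne.symm h23)
  rw [show (u1 - u2) / (u3 - u2) = 1 - (u1 - u3) / (u2 - u3) by field_simp; ring]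
  exact Jfun_one_sub (ratio_ne_zero h13 h23) (ratio_ne_one h12 h23)

section
attribute [local irreducible] jInv3 Jfun
set_option maxHeartbeats 1000000 in
lemma jInv3_perm (u1 u2 u3 v1 v2 v3 : ℂ)
    (h12 : u1 ≠ u2) (h13 : u1 ≠ u3) (h23 : u2 ≠ u3)
    (g12 : v1 ≠ v2) (g13 : v1 ≠ v3) (g23 : v2 ≠ v3)
    (hset : ({u1, u2, u3} : Set ℂ) = {v1, v2, v3}) :
    jInv3 u1 u2 u3 = jInv3 v1 v2 v3 := by
  have hv1 : v1 = u1 ∨ v1 = u2 ∨ v1 = u3 := by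
    have : v1 ∈ ({u1, u2, u3} : Set ℂ) := by rw [hset]; simp
    simpa using this
  have hv2 : v2 = u1 ∨ v2 = u2 ∨ v2 = u3 := by
    have : v2 ∈ ({u1, u2, u3} : Set ℂ) := by rw [hset]; simp
    simpa using this
  have hv3 : v3 = u1 ∨ v3 = u2 ∨ v3 = u3 := by
    have : v3 ∈ ({u1, u2, u3} : Set ℂ) := by rw [hset]; simp
    simpa using this
  rcases hv1 with rfl | rfl | rfl <;> rcases hv2 with rfl | rfl | rfl <;>
    rcases hv3 with rfl | rfl | rfl
  all_goals first
    | exact absurd rfl g12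
    | exact absurd rfl g13
    | exact absurd rfl g23
    | (with_reducible rfl)
    | exact jInv3_swap23 _ _ _ g12 g13 g23
    | exact jInv3_swap12 _ _ _ g12 g13 g23
    | exact (jInv3_swap12 v1 v3 v2 g13 g12 g23.symm).trans
        (jInv3_swap23 _ _ _ g12 g13 g23)
    | exact (jInv3_swap23 v2 v1 v3 g12.symm g23 g13).trans
        (jInv3_swap12 _ _ _ g12 g13 g23)
    | exact (jInv3_swap12 v2 v3 v1 g23 g12.symm g13.symm).trans
        ((jInv3_swap23 v2 v1 v3 g12.symm g23 g13).trans
          (jInv3_swap12 _ _ _ g12 g13 g23))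

end

lemma aff_exists (u1 u2 u3 v1 v2 v3 : ℂ) (h23 : u2 ≠ u3) (g23 : v2 ≠ v3)
    (hr : (u1 - u3) / (u2 - u3) = (v1 - v3) / (v2 - v3)) :
    ∃ a b : ℂ, a ≠ 0 ∧ a * u1 + b = v1 ∧ a * u2 + b = v2 ∧ a * u3 + b = v3 := by
  have d23 : u2 - u3 ≠ 0 := sub_ne_zero.mpr h23
  have e23 : v2 - v3 ≠ 0 := sub_ne_zero.mpr g23
  refine ⟨(v2 - v3) / (u2 - u3), v3 - (v2 - v3) / (u2 - u3) * u3,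
    div_ne_zero e23 d23, ?_, ?_, ?_⟩
  · field_simp at hr ⊢
    linear_combination hr
  · field_simp
    ring
  · ring

lemma Jfun_eq_cases {l m : ℂ} (hl0 : l ≠ 0) (hl1 : l ≠ 1) (hm0 : m ≠ 0) (hm1 : m ≠ 1)
    (h : Jfun l = Jfun m) :
    m = l ∨ m = 1 - l ∨ m = l⁻¹ ∨ m = (1 - l)⁻¹ ∨ m = l / (l - 1) ∨ m = (l - 1) / l := by
  have hl1' : l - 1 ≠ 0 := sub_ne_zero.mpr hl1
  have h1l : (1 : ℂ) - l ≠ 0 := fun h' => hl1 (by linear_combination -h')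
  unfold Jfun at h
  rw [div_eq_div_iff (Jden_ne hl0 hl1) (Jden_ne hm0 hm1)] at h
  have hQ : (m - l) * (m - (1 - l)) * (l * m - 1) * ((1 - l) * m - 1) *
      ((l - 1) * m - l) * (l * m - (l - 1)) = 0 := by
    linear_combination h / 108
  rcases mul_eq_zero.mp hQ with hQ | h6
  · rcases mul_eq_zero.mp hQ with hQ | h5
    · rcases mul_eq_zero.mp hQ with hQ | h4
      · rcases mul_eq_zero.mp hQ with hQ | h3
        · rcases mul_eq_zero.mp hQ with h1 | h2
          · exact Or.inl (by linear_combination h1)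
          · exact Or.inr (Or.inl (by linear_combination h2))
        · exact Or.inr (Or.inr (Or.inl
            (eq_inv_of_mul_eq_one_left (by linear_combination h3))))
      · exact Or.inr (Or.inr (Or.inr (Or.inl
          (eq_inv_of_mul_eq_one_left (by linear_combination h4)))))
    · refine Or.inr (Or.inr (Or.inr (Or.inr (Or.inl ?_))))
      rw [eq_div_iff hl1']
      linear_combination h5
  · refine Or.inr (Or.inr (Or.inr (Or.inr (Or.inr ?_))))
    rw [eq_div_iff hl0]
    linear_combination h6

set_option maxHeartbeats 1000000 in
theorem jInv3_eq_iff_affine_equivalent (z1 z2 z3 w1 w2 w3 : ℂ)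
    (hz12 : z1 ≠ z2) (hz13 : z1 ≠ z3) (hz23 : z2 ≠ z3)
    (hw12 : w1 ≠ w2) (hw13 : w1 ≠ w3) (hw23 : w2 ≠ w3) :
    jInv3 z1 z2 z3 = jInv3 w1 w2 w3 ↔
      ∃ a b : ℂ, a ≠ 0 ∧
        (fun z => a * z + b) '' ({z1, z2, z3} : Set ℂ) = ({w1, w2, w3} : Set ℂ) := by
  have d12 : z1 - z2 ≠ 0 := sub_ne_zero.mpr hz12
  have d13 : z1 - z3 ≠ 0 := sub_ne_zero.mpr hz13
  have d23 : z2 - z3 ≠ 0 := sub_ne_zero.mpr hz23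
  have d21 : z2 - z1 ≠ 0 := sub_ne_zero.mpr (Ne.symm hz12)
  have d31 : z3 - z1 ≠ 0 := sub_ne_zero.mpr (Ne.symm hz13)
  have d32 : z3 - z2 ≠ 0 := sub_ne_zero.mpr (Ne.symm hz23)
  have hL0 : (z1 - z3) / (z2 - z3) ≠ 0 := ratio_ne_zero hz13 hz23
  have hL1 : (z1 - z3) / (z2 - z3) ≠ 1 := ratio_ne_one hz12 hz23
  have hM0 : (w1 - w3) / (w2 - w3) ≠ 0 := ratio_ne_zero hw13 hw23
  have hM1 : (w1 - w3) / (w2 - w3) ≠ 1 := ratio_ne_one hw12 hw23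
  have himg : ∀ a b : ℂ, (fun z => a * z + b) '' ({z1, z2, z3} : Set ℂ) =
      {a * z1 + b, a * z2 + b, a * z3 + b} := by
    intro a b; simp [Set.image_insert_eq]
  constructor
  · intro h
    have hcases := Jfun_eq_cases hL0 hL1 hM0 hM1 h
    have hL1' : (z1 - z3) / (z2 - z3) - 1 ≠ 0 := sub_ne_zero.mpr hL1
    have h1L : (1 : ℂ) - (z1 - z3) / (z2 - z3) ≠ 0 := fun h' => hL1 (by linear_combination -h')
    have e2id : (1 : ℂ) - (z1 - z3) / (z2 - z3) = (z1 - z2) / (z3 - z2) := by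
      rw [eq_div_iff d32]; field_simp; ring
    have e3id : (z1 - z3) / (z2 - z3) / ((z1 - z3) / (z2 - z3) - 1) = (z3 - z1) / (z2 - z1) := by
      rw [div_eq_div_iff hL1' d21]; field_simp; ring
    have e4id : ((z1 - z3) / (z2 - z3) - 1) / ((z1 - z3) / (z2 - z3)) = (z2 - z1) / (z3 - z1) := by
      rw [div_eq_div_iff hL0 d31]; field_simp; ring
    rcases hcases with hc | hc | hc | hc | hc | hc
    · -- identity: (z1,z2,z3) ↦ (w1,w2,w3)
      obtain ⟨a, b, ha, e1, e2, e3⟩ := aff_exists z1 z2 z3 w1 w2 w3 hz23 hw23 hc.symm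
      exact ⟨a, b, ha, by rw [himg, e1, e2, e3]⟩
    · -- m = 1 - l : (z1,z3,z2) ↦ (w1,w2,w3)
      have hr : (z1 - z2) / (z3 - z2) = (w1 - w3) / (w2 - w3) := by
        rw [hc]; exact e2id.symm
      obtain ⟨a, b, ha, e1, e2, e3⟩ :=
        aff_exists z1 z3 z2 w1 w2 w3 (Ne.symm hz23) hw23 hr
      refine ⟨a, b, ha, ?_⟩
      rw [himg, e1, e2, e3]
      ext x; simp; tauto
    · -- m = l⁻¹ : (z2,z1,z3) ↦ (w1,w2,w3)
      have hr : (z2 - z3) / (z1 - z3) = (w1 - w3) / (w2 - w3) := by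
        rw [hc, inv_div]
      obtain ⟨a, b, ha, e1, e2, e3⟩ := aff_exists z2 z1 z3 w1 w2 w3 hz13 hw23 hr
      refine ⟨a, b, ha, ?_⟩
      rw [himg, e1, e2, e3]
      ext x; simp; tauto
    · -- m = (1-l)⁻¹ : (z3,z1,z2) ↦ (w1,w2,w3)
      have hr : (z3 - z2) / (z1 - z2) = (w1 - w3) / (w2 - w3) := by
        rw [hc, e2id, inv_div]
      obtain ⟨a, b, ha, e1, e2, e3⟩ := aff_exists z3 z1 z2 w1 w2 w3 hz12 hw23 hr
      refine ⟨a, b, ha, ?_⟩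
      rw [himg, e1, e2, e3]
      ext x; simp; tauto
    · -- m = l/(l-1) : (z3,z2,z1) ↦ (w1,w2,w3)
      have hr : (z3 - z1) / (z2 - z1) = (w1 - w3) / (w2 - w3) := by
        rw [hc]; exact e3id.symm
      obtain ⟨a, b, ha, e1, e2, e3⟩ :=
        aff_exists z3 z2 z1 w1 w2 w3 (Ne.symm hz12) hw23 hr
      refine ⟨a, b, ha, ?_⟩
      rw [himg, e1, e2, e3]
      ext x; simp; tauto
    · -- m = (l-1)/l : (z2,z3,z1) ↦ (w1,w2,w3)
      have hr : (z2 - z1) / (z3 - z1) = (w1 - w3) / (w2 - w3) := by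
        rw [hc]; exact e4id.symm
      obtain ⟨a, b, ha, e1, e2, e3⟩ :=
        aff_exists z2 z3 z1 w1 w2 w3 (Ne.symm hz13) hw23 hr
      refine ⟨a, b, ha, ?_⟩
      rw [himg, e1, e2, e3]
      ext x; simp; tauto
  · rintro ⟨a, b, ha, hset⟩
    rw [himg] at hset
    have hinv : jInv3 (a * z1 + b) (a * z2 + b) (a * z3 + b) = jInv3 z1 z2 z3 := by
      unfold jInv3
      congr 1
      rw [show a * z1 + b - (a * z3 + b) = a * (z1 - z3) by ring,
        show a * z2 + b - (a * z3 + b) = a * (z2 - z3) by ring,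
        mul_div_mul_left _ _ ha]
    have hne : ∀ x y : ℂ, x ≠ y → a * x + b ≠ a * y + b := by
      intro x y hxy h
      exact hxy (by
        have : a * x = a * y := by linear_combination h
        exact mul_left_cancel₀ ha this)
    rw [← hinv]
    exact jInv3_perm _ _ _ _ _ _ (hne _ _ hz12) (hne _ _ hz13) (hne _ _ hz23)
      hw12 hw13 hw23 hset
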